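/- Let p ≥ 2 and let T be a spider with p legs, each of length at least 2. Then min{ ν(T − e_1 − e_2) : e_1, e_2 distinct edges of T } ≤ min{ ν(T − e) : e an edge of T }, with equality if and only if T has exactly one leg of even length. -/

import Mathlib

open SimpleGraph Finset

/-!
Write `S = ∑ ⌊l i / 2⌋` and number the positions on each leg from the center. Alternate edges of
the legs form matchings (as long as at most one leg uses its central edge), and the center together
with alternate vertices of the legs forms vertex covers.

Matchings: if the deleted edges on each leg have a single parity, every leg keeps `⌊l i / 2⌋`
edges, the center being needed only by an even leg that lost odd edges; two deleted edges on one
leg cost at most one edge, which matching the center into an odd leg recovers; with all legs odd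
the center is matched for free. Covers: deleting edge `1` of an even leg, or edges `1, 2` of an odd
leg, saves a cover vertex on that leg.

So `min ν(T - e) ≥ S`, with equality if some leg is even and `> S` if none is, while
`min ν(T - e₁ - e₂)` is `≤ S - 1` with two even legs, `≤ S` with none and `≥ S` with exactly one.
The inequality itself is monotonicity of `ν` under deleting edges.
-/

/-- Number of colors used by an edge-coloring of the complete graph on `Fin n`. -/
noncomputable def colorCount {n : ℕ} (c : Sym2 (Fin n) → ℕ) : ℕ :=
  (c '' (⊤ : SimpleGraph (Fin n)).edgeSet).ncard

/-- The coloring `c` of `K_n` admits a rainbow copy of the graph `G`. -/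
def HasRainbowCopy {α : Type*} {n : ℕ} (c : Sym2 (Fin n) → ℕ) (G : SimpleGraph α) : Prop :=
  ∃ f : α → Fin n, Function.Injective f ∧
    ∀ e₁ ∈ G.edgeSet, ∀ e₂ ∈ G.edgeSet, e₁ ≠ e₂ → c (Sym2.map f e₁) ≠ c (Sym2.map f e₂)

/-- The anti-Ramsey number `ar(K_n, G)`: the maximum number of colors in an edge-coloring
of `K_n` with no rainbow copy of `G`. -/
noncomputable def antiRamsey (n : ℕ) {α : Type*} (G : SimpleGraph α) : ℕ :=
  sSup {m | ∃ c : Sym2 (Fin n) → ℕ, ¬ HasRainbowCopy c G ∧ colorCount c = m}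

/-- The spider with `p` legs of lengths `l 0, …, l (p-1)`: `none` is the center, and the
`i`-th leg is the path `center - (i,0) - (i,1) - ⋯ - (i, l i - 1)` (with `l i` edges). -/
def spider (p : ℕ) (l : Fin p → ℕ) : SimpleGraph (Option (Σ i : Fin p, Fin (l i))) where
  Adj u v :=
    (∃ a, u = none ∧ v = some a ∧ a.2.val = 0) ∨
    (∃ a, v = none ∧ u = some a ∧ a.2.val = 0) ∨
    (∃ a b, u = some a ∧ v = some b ∧ a.1 = b.1 ∧
      (a.2.val + 1 = b.2.val ∨ b.2.val + 1 = a.2.val))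
  symm := by
    constructor
    rintro u v h
    rcases h with ⟨a, h1, h2, h3⟩ | ⟨a, h1, h2, h3⟩ | ⟨a, b, h1, h2, h3, h4⟩
    · exact Or.inr (Or.inl ⟨a, h1, h2, h3⟩)
    · exact Or.inl ⟨a, h1, h2, h3⟩
    · exact Or.inr (Or.inr ⟨b, a, h2, h1, h3.symm, h4.symm⟩)
  loopless := by
    constructor
    rintro u h
    rcases h with ⟨a, h1, h2, h3⟩ | ⟨a, h1, h2, h3⟩ | ⟨a, b, h1, h2, h3, h4⟩
    · rw [h1] at h2; exact absurd h2 (by simp)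
    · rw [h2] at h1; exact absurd h1 (by simp)
    · rw [h1] at h2; injection h2 with h; subst h; omega

/-- `s` is a matching in `G`: a set of edges of `G` which pairwise share no vertex. -/
def IsMatchingIn {V : Type*} (G : SimpleGraph V) (s : Finset (Sym2 V)) : Prop :=
  (∀ e ∈ s, e ∈ G.edgeSet) ∧
  ∀ e₁ ∈ s, ∀ e₂ ∈ s, e₁ ≠ e₂ → ∀ v, v ∈ e₁ → v ∉ e₂

/-- The matching number `ν(G)`: the maximum size of a matching in `G`. -/
noncomputable def matchingNumber {V : Type*} (G : SimpleGraph V) : ℕ :=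
  sSup {m | ∃ s : Finset (Sym2 V), IsMatchingIn G s ∧ s.card = m}

section MatchingNumber

variable {V : Type*} {G H : SimpleGraph V} {s : Finset (Sym2 V)}

lemma isMatchingIn_empty : IsMatchingIn G ∅ := ⟨by simp, by simp⟩

lemma IsMatchingIn.mono (hs : IsMatchingIn G s) (hGH : G ≤ H) : IsMatchingIn H s :=
  ⟨fun e he => edgeSet_mono hGH (hs.1 e he), hs.2⟩

/-- Each vertex of a cover meets at most one edge of a matching. -/
lemma IsMatchingIn.card_le_of_cover (hs : IsMatchingIn G s) {C : Finset V}
    (hC : ∀ e ∈ G.edgeSet, ∃ v ∈ C, v ∈ e) : s.card ≤ C.card := by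
  classical
  calc s.card ≤ (C.biUnion fun v => s.filter (v ∈ ·)).card := card_le_card fun e he => by
        obtain ⟨v, hv, hve⟩ := hC e (hs.1 e he)
        exact mem_biUnion.2 ⟨v, hv, mem_filter.2 ⟨he, hve⟩⟩
    _ ≤ ∑ v ∈ C, (s.filter (v ∈ ·)).card := card_biUnion_le
    _ ≤ ∑ _v ∈ C, 1 := sum_le_sum fun v _ => card_le_one.2 fun e he f hf => by
        rw [mem_filter] at he hf
        by_contra hef
        exact hs.2 e he.1 f hf.1 hef v he.2 hf.2
    _ = C.card := by simp

lemma matchingNumber_le_card_of_cover {C : Finset V} (hC : ∀ e ∈ G.edgeSet, ∃ v ∈ C, v ∈ e) :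
    matchingNumber G ≤ C.card :=
  csSup_le ⟨0, ∅, isMatchingIn_empty, rfl⟩ fun _ ⟨_, hs, h⟩ => h ▸ hs.card_le_of_cover hC

variable [Fintype V]

lemma IsMatchingIn.card_le_matchingNumber (hs : IsMatchingIn G s) : s.card ≤ matchingNumber G :=
  le_csSup ⟨Fintype.card V, fun _ ⟨_, ht, h⟩ => h ▸ by
    simpa using ht.card_le_of_cover (C := univ) fun e _ => ⟨_, mem_univ _, e.out_fst_mem⟩⟩
    ⟨s, hs, rfl⟩

lemma matchingNumber_mono (hGH : G ≤ H) : matchingNumber G ≤ matchingNumber H :=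
  csSup_le ⟨0, ∅, isMatchingIn_empty, rfl⟩ fun _ ⟨_, hs, h⟩ =>
    h ▸ (hs.mono hGH).card_le_matchingNumber

end MatchingNumber

section DeletionMinima

variable {V : Type*} {G : SimpleGraph V} {n : ℕ}

noncomputable def minMatchingDeleteOne (G : SimpleGraph V) : ℕ :=
  sInf {m | ∃ e ∈ G.edgeSet, matchingNumber (G.deleteEdges {e}) = m}

noncomputable def minMatchingDeleteTwo (G : SimpleGraph V) : ℕ :=
  sInf {m | ∃ e₁ ∈ G.edgeSet, ∃ e₂ ∈ G.edgeSet, e₁ ≠ e₂ ∧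
    matchingNumber (G.deleteEdges {e₁, e₂}) = m}

lemma minMatchingDeleteOne_le {e : Sym2 V} (he : e ∈ G.edgeSet) :
    minMatchingDeleteOne G ≤ matchingNumber (G.deleteEdges {e}) :=
  Nat.sInf_le ⟨e, he, rfl⟩

lemma minMatchingDeleteTwo_le {e₁ e₂ : Sym2 V} (he₁ : e₁ ∈ G.edgeSet) (he₂ : e₂ ∈ G.edgeSet)
    (hne : e₁ ≠ e₂) : minMatchingDeleteTwo G ≤ matchingNumber (G.deleteEdges {e₁, e₂}) :=
  Nat.sInf_le ⟨e₁, he₁, e₂, he₂, hne, rfl⟩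

lemma le_minMatchingDeleteOne (hG : G.edgeSet.Nonempty)
    (h : ∀ e ∈ G.edgeSet, n ≤ matchingNumber (G.deleteEdges {e})) :
    n ≤ minMatchingDeleteOne G :=
  le_csInf (hG.elim fun e he => ⟨_, e, he, rfl⟩) fun _ ⟨e, he, hm⟩ => hm ▸ h e he

lemma le_minMatchingDeleteTwo (hG : ∃ e₁ ∈ G.edgeSet, ∃ e₂ ∈ G.edgeSet, e₁ ≠ e₂)
    (h : ∀ e₁ ∈ G.edgeSet, ∀ e₂ ∈ G.edgeSet, e₁ ≠ e₂ →
      n ≤ matchingNumber (G.deleteEdges {e₁, e₂})) :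
    n ≤ minMatchingDeleteTwo G :=
  le_csInf (hG.elim fun e₁ ⟨he₁, e₂, he₂, hne⟩ => ⟨_, e₁, he₁, e₂, he₂, hne, rfl⟩)
    fun _ ⟨e₁, he₁, e₂, he₂, hne, hm⟩ => hm ▸ h e₁ he₁ e₂ he₂ hne

lemma minMatchingDeleteTwo_le_minMatchingDeleteOne [Fintype V]
    (hG : ∃ e₁ ∈ G.edgeSet, ∃ e₂ ∈ G.edgeSet, e₁ ≠ e₂) :
    minMatchingDeleteTwo G ≤ minMatchingDeleteOne G := by
  obtain ⟨e₁, he₁, e₂, he₂, hne⟩ := hG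
  obtain ⟨e, he, hmin⟩ : minMatchingDeleteOne G ∈ _ := Nat.sInf_mem ⟨_, e₁, he₁, rfl⟩
  obtain ⟨f, hf, hfe⟩ : ∃ f ∈ G.edgeSet, e ≠ f := by
    by_cases h : e = e₁
    · exact ⟨e₂, he₂, h ▸ hne⟩
    · exact ⟨e₁, he₁, h⟩
  calc minMatchingDeleteTwo G ≤ matchingNumber (G.deleteEdges {e, f}) :=
        minMatchingDeleteTwo_le he hf hfe
    _ ≤ matchingNumber (G.deleteEdges {e}) :=
        matchingNumber_mono (deleteEdges_anti (Set.singleton_subset_iff.2 (Set.mem_insert _ _)))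
    _ = minMatchingDeleteOne G := hmin

end DeletionMinima

/-- `{a, a + 2, a + 4, …} ∩ [a, b - 1)`: the alternate edges `q — q + 1` of the path on `[a, b)`,
starting with its first edge. -/
def alternating (a b : ℕ) : Finset ℕ := (range ((b - a) / 2)).image (a + 2 * ·)

lemma mem_alternating {a b q : ℕ} : q ∈ alternating a b ↔ a ≤ q ∧ q + 2 ≤ b ∧ q % 2 = a % 2 := by
  simp only [alternating, mem_image, mem_range]
  constructor
  · rintro ⟨k, hk, rfl⟩
    omega
  · rintro ⟨h₁, h₂, h₃⟩
    exact ⟨(q - a) / 2, by omega, by omega⟩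

lemma card_alternating (a b : ℕ) : (alternating a b).card = (b - a) / 2 := by
  rw [alternating, card_image_of_injective _ fun x y (h : a + 2 * x = a + 2 * y) => by omega,
    card_range]

/-- `P` is a matching of the path `0 — 1 — ⋯ — L`, the edge `q — q + 1` being recorded as `q`. -/
def IsPathMatching (L : ℕ) (P : Finset ℕ) : Prop :=
  ∀ q ∈ P, q < L ∧ ∀ q' ∈ P, q < q' → q + 2 ≤ q'

lemma IsPathMatching.eq_of_le_add_one {L : ℕ} {P : Finset ℕ} (hP : IsPathMatching L P) {q q' : ℕ}
    (hq : q ∈ P) (hq' : q' ∈ P) (h₁ : q ≤ q' + 1) (h₂ : q' ≤ q + 1) : q = q' := by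
  by_contra hne
  rcases Nat.lt_or_gt_of_ne hne with hlt | hlt
  · have := (hP q hq).2 q' hq' hlt
    omega
  · have := (hP q' hq').2 q hq hlt
    omega

lemma isPathMatching_alternating {L a b : ℕ} (hb : b ≤ L + 1) :
    IsPathMatching L (alternating a b) := by
  intro q hq
  rw [mem_alternating] at hq
  refine ⟨by omega, fun q' hq' hlt => ?_⟩
  rw [mem_alternating] at hq'
  omega

/-- Restarting the alternating matching after each of two cut edges loses at most one edge. -/
lemma exists_isPathMatching_avoiding_pair {L s a b : ℕ} (hs : s ≤ 1) (hab : a < b) (hbL : b < L) :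
    ∃ P, IsPathMatching L P ∧ a ∉ P ∧ b ∉ P ∧ (0 ∈ P → s = 0) ∧ (L + 1 - s) / 2 ≤ P.card + 1 := by
  refine ⟨alternating s (a + 1) ∪ alternating (a + 1) (b + 1) ∪ alternating (b + 1) (L + 1),
    ?_, ?_, ?_, ?_, ?_⟩
  · intro q hq
    simp only [mem_union, mem_alternating] at hq
    refine ⟨by omega, fun q' hq' hlt => ?_⟩
    simp only [mem_union, mem_alternating] at hq'
    omega
  iterate 3 · simp only [mem_union, mem_alternating]; omega
  · rw [card_union_of_disjoint, card_union_of_disjoint, card_alternating, card_alternating,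
      card_alternating]
    · omega
    all_goals
      rw [Finset.disjoint_left]
      intro q hq hq'
      simp only [mem_union, mem_alternating] at hq hq'
      omega

section Spider

variable {p : ℕ} {l : Fin p → ℕ}

/-- Position `q` on leg `i`: the center for `q = 0`, the `q`-th vertex of the leg for
`1 ≤ q ≤ l i` (and, as a junk value, the center again beyond the leaf). -/
def legVertex (l : Fin p → ℕ) (i : Fin p) : ℕ → Option (Σ i : Fin p, Fin (l i))
  | 0 => none
  | q + 1 => if h : q < l i then some ⟨i, q, h⟩ else none

def legEdge (l : Fin p → ℕ) (i : Fin p) (q : ℕ) : Sym2 (Option (Σ i : Fin p, Fin (l i))) :=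
  s(legVertex l i q, legVertex l i (q + 1))

lemma legVertex_eq_legVertex_iff {i j : Fin p} {a b : ℕ} (ha : a ≤ l i) (hb : b ≤ l j) :
    legVertex l i a = legVertex l j b ↔ a = b ∧ (a = 0 ∨ i = j) := by
  cases a <;> cases b
  · simp [legVertex]
  · simp [legVertex, show _ < l j from hb]
  · simp [legVertex, show _ < l i from ha]
  · simp only [legVertex, show _ < l i from ha, show _ < l j from hb, dite_true,
      Option.some.injEq, Sigma.mk.injEq, Nat.add_right_cancel_iff, Nat.add_eq_zero_iff,
      one_ne_zero, and_false, false_or]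
    constructor
    · rintro ⟨rfl, h⟩
      exact ⟨by simpa using h, rfl⟩
    · rintro ⟨rfl, rfl⟩
      exact ⟨rfl, HEq.rfl⟩

lemma legEdge_eq_legEdge_iff {i j : Fin p} {q q' : ℕ} (hq : q < l i) (hq' : q' < l j) :
    legEdge l i q = legEdge l j q' ↔ i = j ∧ q = q' := by
  rw [legEdge, legEdge, Sym2.eq_iff]
  iterate 4 rw [legVertex_eq_legVertex_iff (by omega) (by omega)]
  constructor
  · rintro (⟨⟨rfl, _⟩, ⟨-, h | rfl⟩⟩ | ⟨⟨h, _⟩, ⟨h', _⟩⟩)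
    · omega
    · exact ⟨rfl, rfl⟩
    · omega
  · rintro ⟨rfl, rfl⟩
    exact Or.inl ⟨⟨rfl, Or.inr rfl⟩, ⟨rfl, Or.inr rfl⟩⟩

lemma legEdge_mem_edgeSet {i : Fin p} {q : ℕ} (hq : q < l i) :
    legEdge l i q ∈ (spider p l).edgeSet := by
  cases q with
  | zero => exact Or.inl ⟨⟨i, 0, hq⟩, rfl, by simp [legVertex, hq], rfl⟩
  | succ q =>
    exact Or.inr (Or.inr ⟨⟨i, q, by omega⟩, ⟨i, q + 1, hq⟩,
      by simp [legVertex, show q < l i by omega], by simp [legVertex, hq], rfl, Or.inl rfl⟩)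

lemma exists_legEdge_eq {e : Sym2 (Option (Σ i : Fin p, Fin (l i)))}
    (he : e ∈ (spider p l).edgeSet) :
    ∃ i q, q < l i ∧ legEdge l i q = e := by
  induction e using Sym2.ind with | _ u v => ?_
  rcases he with ⟨⟨i, x, hx⟩, rfl, rfl, rfl⟩ | ⟨⟨i, x, hx⟩, rfl, rfl, rfl⟩ |
    ⟨⟨i, x, hx⟩, ⟨j, y, hy⟩, rfl, rfl, rfl, h | h⟩
  · exact ⟨i, 0, hx, by simp [legEdge, legVertex, hx]⟩
  · exact ⟨i, 0, hx, by simp [legEdge, legVertex, hx, Sym2.eq_swap]⟩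
  all_goals simp only at h hy ⊢
  · subst h
    exact ⟨i, x + 1, hy, by simp [legEdge, legVertex, hx, hy]⟩
  · subst h
    exact ⟨i, y + 1, hx, by simp [legEdge, legVertex, hx, hy, Sym2.eq_swap]⟩

lemma eq_zero_or_near_of_mem_legEdge {i j : Fin p} {q q' : ℕ}
    {v : Option (Σ i : Fin p, Fin (l i))} (hq : q < l i) (hq' : q' < l j) (hv : v ∈ legEdge l i q) (hv' : v ∈ legEdge l j q') :
    (q = 0 ∧ q' = 0) ∨ (i = j ∧ q ≤ q' + 1 ∧ q' ≤ q + 1) := by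
  rw [legEdge, Sym2.mem_iff] at hv hv'
  rcases hv with rfl | rfl <;> rcases hv' with h | h <;>
    rw [legVertex_eq_legVertex_iff (by omega) (by omega)] at h <;>
    rcases h with ⟨h, h' | rfl⟩
  all_goals first | (left; omega) | (right; exact ⟨rfl, by omega, by omega⟩)

theorem sum_card_le_matchingNumber_deleteEdges (D : Set (Sym2 _)) (P : Fin p → Finset ℕ)
    (hP : ∀ i, IsPathMatching (l i) (P i)) (hD : ∀ i, ∀ q ∈ P i, legEdge l i q ∉ D)
    (hcenter : ∀ i j, 0 ∈ P i → 0 ∈ P j → i = j) :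
    ∑ i, (P i).card ≤ matchingNumber ((spider p l).deleteEdges D) := by
  have hinj : Set.InjOn (fun x : Σ _ : Fin p, ℕ => legEdge l x.1 x.2) (univ.sigma P) := by
    rintro ⟨i, q⟩ hx ⟨j, q'⟩ hy h
    simp only [mem_coe, mem_sigma, mem_univ, true_and] at hx hy
    obtain ⟨rfl, rfl⟩ := (legEdge_eq_legEdge_iff (hP i q hx).1 (hP j q' hy).1).1 h
    rfl
  rw [← card_sigma, ← card_image_of_injOn hinj]
  refine IsMatchingIn.card_le_matchingNumber ⟨?_, ?_⟩
  · intro e he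
    obtain ⟨⟨i, q⟩, hq, rfl⟩ := mem_image.1 he
    rw [mem_sigma] at hq
    rw [edgeSet_deleteEdges]
    exact ⟨legEdge_mem_edgeSet (hP i q hq.2).1, hD i q hq.2⟩
  · simp only [mem_image, mem_sigma, mem_univ, true_and, forall_exists_index, and_imp]
    rintro _ ⟨i, q⟩ hq rfl _ ⟨j, q'⟩ hq' rfl hne v hv hv'
    rcases eq_zero_or_near_of_mem_legEdge (hP i q hq).1 (hP j q' hq').1 hv hv' with
      ⟨rfl, rfl⟩ | ⟨rfl, h₁, h₂⟩
    · exact hne (by rw [hcenter i j hq hq'])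
    · exact hne (by rw [(hP i).eq_of_le_add_one hq hq' h₁ h₂])

theorem sum_alternating_le_matchingNumber_deleteEdges (D : Set (Sym2 _)) (s : Fin p → ℕ)
    (hD : ∀ i, ∀ q ∈ alternating (s i) (l i + 1), legEdge l i q ∉ D)
    (hcenter : ∀ i j, s i = 0 → s j = 0 → i = j) :
    ∑ i, (l i + 1 - s i) / 2 ≤ matchingNumber ((spider p l).deleteEdges D) := by
  simpa [card_alternating] using sum_card_le_matchingNumber_deleteEdges D
    (fun i => alternating (s i) (l i + 1)) (fun i => isPathMatching_alternating le_rfl) hD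
    fun i j hi hj => hcenter i j (by rw [mem_alternating] at hi; omega)
      (by rw [mem_alternating] at hj; omega)

/-- The center together with alternate vertices of each leg, from position `s i + 1` on, covers
every edge once the edges `1, …, s i - 1` of leg `i` are deleted. -/
theorem matchingNumber_deleteEdges_le_sum_alternating (D : Set (Sym2 _)) (s : Fin p → ℕ)
    (hD : ∀ i q, 0 < q → q < s i → q < l i → legEdge l i q ∈ D) :
    matchingNumber ((spider p l).deleteEdges D) ≤ 1 + ∑ i, (l i + 1 - s i) / 2 := by
  set C := insert none ((univ.sigma fun i => alternating (s i + 1) (l i + 2)).image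
    fun x => legVertex l x.1 x.2)
  calc matchingNumber ((spider p l).deleteEdges D) ≤ C.card := matchingNumber_le_card_of_cover ?_
    _ ≤ 1 + ∑ i, (l i + 1 - s i) / 2 := by
      refine (card_insert_le _ _).trans ?_
      rw [add_comm]
      gcongr
      refine card_image_le.trans_eq ?_
      rw [card_sigma]
      exact sum_congr rfl fun i _ => by rw [card_alternating]; omega
  intro e he
  rw [edgeSet_deleteEdges] at he
  obtain ⟨he, heD⟩ := he
  obtain ⟨i, q, hq, rfl⟩ := exists_legEdge_eq he
  have hsq : q = 0 ∨ s i ≤ q := by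
    by_contra! h
    exact heD (hD i q (by omega) h.2 hq)
  rcases hsq with rfl | hsq
  · exact ⟨none, mem_insert_self _ _, Sym2.mem_mk_left _ _⟩
  have hmem : ∀ r, r % 2 = (s i + 1) % 2 → s i + 1 ≤ r → r ≤ l i → legVertex l i r ∈ C :=
    fun r hr h₁ h₂ => mem_insert_of_mem (mem_image.2 ⟨⟨i, r⟩, mem_sigma.2 ⟨mem_univ _,
      (mem_alternating.2 ⟨h₁, by omega, hr⟩ : r ∈ alternating (s i + 1) (l i + 2))⟩, rfl⟩)
  by_cases hpar : q % 2 = (s i + 1) % 2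
  · exact ⟨_, hmem q hpar (by omega) hq.le, Sym2.mem_mk_left _ _⟩
  · exact ⟨_, hmem (q + 1) (by omega) (by omega) hq, Sym2.mem_mk_right _ _⟩

lemma exists_alternating_avoiding_parity (L r : ℕ) :
    ∃ s, (L + 1 - s) / 2 = L / 2 ∧ (∀ q ∈ alternating s (L + 1), q % 2 ≠ r % 2) ∧
      (s = 0 → L % 2 = 0 ∧ r % 2 = 1) := by
  by_cases hr : r % 2 = 0
  · exact ⟨1, by omega, fun q hq => by rw [mem_alternating] at hq; omega, by omega⟩
  by_cases hL : L % 2 = 0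
  · exact ⟨0, by omega, fun q hq => by rw [mem_alternating] at hq; omega, fun _ => ⟨hL, by omega⟩⟩
  · exact ⟨2, by omega, fun q hq => by rw [mem_alternating] at hq; omega, by omega⟩

/-- Each leg keeps an alternating matching of `⌊l i / 2⌋` edges avoiding the parity of `r i`; only
an even leg avoiding odd edges has to start it at the center. -/
theorem sum_half_le_matchingNumber_deleteEdges_of_parity (D : Set (Sym2 _)) (r : Fin p → ℕ)
    (hD : ∀ i q, q < l i → legEdge l i q ∈ D → q % 2 = r i % 2)
    (hcenter : ∀ i j, Even (l i) → Odd (r i) → Even (l j) → Odd (r j) → i = j) :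
    ∑ i, l i / 2 ≤ matchingNumber ((spider p l).deleteEdges D) := by
  choose s hs using fun i => exists_alternating_avoiding_parity (l i) (r i)
  calc ∑ i, l i / 2 = ∑ i, (l i + 1 - s i) / 2 := sum_congr rfl fun i _ => (hs i).1.symm
    _ ≤ _ := sum_alternating_le_matchingNumber_deleteEdges D s
      (fun i q hq hqD => (hs i).2.1 q hq (hD i q (by rw [mem_alternating] at hq; omega) hqD))
      fun i j hi hj => by
        obtain ⟨h₁, h₂⟩ := (hs i).2.2 hi
        obtain ⟨h₃, h₄⟩ := (hs j).2.2 hj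
        exact hcenter i j (Nat.even_iff.2 h₁) (Nat.odd_iff.2 h₂) (Nat.even_iff.2 h₃)
          (Nat.odd_iff.2 h₄)

theorem sum_half_le_matchingNumber_deleteEdges_single {i : Fin p} {q : ℕ} (hq : q < l i) :
    ∑ j, l j / 2 ≤ matchingNumber ((spider p l).deleteEdges {legEdge l i q}) := by
  have key : ∀ j, Odd (if j = i then q else 0) → j = i := fun j h => by
    by_contra hj
    simp [hj] at h
  refine sum_half_le_matchingNumber_deleteEdges_of_parity _ (fun j => if j = i then q else 0)
    (fun j q' hq' h => ?_) fun j k _ hj _ hk => (key j hj).trans (key k hk).symm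
  obtain ⟨rfl, rfl⟩ := (legEdge_eq_legEdge_iff hq' hq).1 h
  simp

/-- With all legs odd, the center can always be matched into an odd leg for free. -/
theorem sum_half_lt_matchingNumber_deleteEdges_single (hp : 2 ≤ p) (hodd : ∀ j, Odd (l j))
    {i : Fin p} {q : ℕ} (hq : q < l i) :
    ∑ j, l j / 2 < matchingNumber ((spider p l).deleteEdges {legEdge l i q}) := by
  obtain ⟨c, hc⟩ : ∃ c, (i = c ↔ q % 2 = 1) := by
    by_cases h : q % 2 = 1
    · exact ⟨i, by simp [h]⟩
    · have := Fin.nontrivial_iff_two_le.2 hp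
      obtain ⟨c, hc⟩ := exists_ne i
      exact ⟨c, by simp [Ne.symm hc, h]⟩
  have key : ∀ j, (if j = c then 0 else 1) = 0 → j = c := fun j h => by
    by_contra hj
    simp [hj] at h
  calc ∑ j, l j / 2 < ∑ j, (l j + 1 - if j = c then 0 else 1) / 2 := by
        refine sum_lt_sum (fun j _ => by split_ifs <;> omega) ⟨c, mem_univ _, ?_⟩
        have := Nat.odd_iff.1 (hodd c)
        simp only [if_true]
        omega
    _ ≤ _ := sum_alternating_le_matchingNumber_deleteEdges _ _ (fun j q' hq' h => ?_)
        fun j k hj hk => (key j hj).trans (key k hk).symm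
  rw [Set.mem_singleton_iff] at h
  obtain ⟨rfl, rfl⟩ := (legEdge_eq_legEdge_iff (by rw [mem_alternating] at hq'; omega) hq).1 h
  rw [mem_alternating] at hq'
  split_ifs at hq' with hjc <;> simp only [hjc, true_iff, false_iff] at hc <;> omega

lemma sum_le_sum_of_add_ite_le {ι : Type*} [Fintype ι] [DecidableEq ι] {f g : ι → ℕ} (i c : ι)
    (h : ∀ j, f j + (if j = c then 1 else 0) ≤ g j + (if j = i then 1 else 0)) :
    ∑ j, f j ≤ ∑ j, g j := by
  have := sum_le_sum fun j (_ : j ∈ univ) => h j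
  simp only [sum_add_distrib, sum_ite_eq', mem_univ, if_true] at this
  omega

/-- Two deleted edges on one leg: that leg keeps `⌊l i / 2⌋ - 1` edges, and the center makes up
for the loss in an odd leg. -/
theorem sum_half_le_matchingNumber_deleteEdges_pair_of_lt (hodd : ∃ k, Odd (l k)) {i : Fin p}
    {q₁ q₂ : ℕ} (hlt : q₁ < q₂) (hq₂ : q₂ < l i) :
    ∑ j, l j / 2 ≤ matchingNumber ((spider p l).deleteEdges {legEdge l i q₁, legEdge l i q₂}) := by
  obtain ⟨c, hc, hci⟩ : ∃ c, Odd (l c) ∧ (Odd (l i) → i = c) := by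
    by_cases h : Odd (l i)
    · exact ⟨i, h, fun _ => rfl⟩
    · obtain ⟨k, hk⟩ := hodd
      exact ⟨k, hk, fun h' => absurd h' h⟩
  obtain ⟨P₀, hP₀, h₁, h₂, h0, hcard⟩ := exists_isPathMatching_avoiding_pair
    (L := l i) (s := if i = c then 0 else 1) (by split_ifs <;> omega) hlt hq₂
  set P := fun j => if j = i then P₀ else alternating (if j = c then 0 else 1) (l j + 1)
  have hP : ∀ j, IsPathMatching (l j) (P j) := fun j => by
    by_cases hj : j = i
    · subst hj
      simpa only [P, if_pos rfl] using hP₀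
    · simpa only [P, if_neg hj] using isPathMatching_alternating le_rfl
  calc ∑ j, l j / 2 ≤ ∑ j, (P j).card := sum_le_sum_of_add_ite_le i c fun j => ?_
    _ ≤ _ := sum_card_le_matchingNumber_deleteEdges _ P hP (fun j q hq h => ?_) fun j k hj hk => ?_
  · have := Nat.odd_iff.1 hc
    have : i ≠ c → l i % 2 = 0 := fun h => Nat.even_iff.1 (Nat.not_odd_iff_even.1 (mt hci h))
    simp only [P]
    split_ifs at hcard ⊢ <;> simp_all [card_alternating] <;> omega
  · have hqj := (hP j q hq).1
    simp only [Set.mem_insert_iff, Set.mem_singleton_iff] at h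
    rcases h with h | h <;> obtain ⟨rfl, rfl⟩ := (legEdge_eq_legEdge_iff hqj (by omega)).1 h <;>
      simp_all [P]
  · have key : ∀ j, 0 ∈ P j → j = c := fun j h => by
      by_contra hjc
      by_cases hj : j = i
      · simp only [P, if_pos hj] at h
        simpa [← hj, hjc] using h0 h
      · simp only [P, if_neg hj, if_neg hjc, mem_alternating] at h
        omega
    exact (key j hj).trans (key k hk).symm

theorem sum_half_le_matchingNumber_deleteEdges_pair
    (hunique : ∀ j k, Even (l j) → Even (l k) → j = k) (hodd : ∃ k, Odd (l k))
    {i₁ i₂ : Fin p} {q₁ q₂ : ℕ} (hq₁ : q₁ < l i₁) (hq₂ : q₂ < l i₂)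
    (hne : legEdge l i₁ q₁ ≠ legEdge l i₂ q₂) :
    ∑ j, l j / 2 ≤
      matchingNumber ((spider p l).deleteEdges {legEdge l i₁ q₁, legEdge l i₂ q₂}) := by
  by_cases hi : i₁ = i₂
  · subst hi
    rcases lt_or_gt_of_ne fun h : q₁ = q₂ => hne (h ▸ rfl) with h | h
    · exact sum_half_le_matchingNumber_deleteEdges_pair_of_lt hodd h hq₂
    · rw [Set.pair_comm]
      exact sum_half_le_matchingNumber_deleteEdges_pair_of_lt hodd h hq₁
  refine sum_half_le_matchingNumber_deleteEdges_of_parity _ (fun j => if j = i₁ then q₁ else q₂)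
    (fun j q hq h => ?_) fun j k hj _ hk _ => hunique j k hj hk
  rcases h with h | h
  · obtain ⟨rfl, rfl⟩ := (legEdge_eq_legEdge_iff hq hq₁).1 h
    simp
  · obtain ⟨rfl, rfl⟩ := (legEdge_eq_legEdge_iff hq hq₂).1 h
    simp [Ne.symm hi]

/-- Each leg `k ∈ K` loses its edges `1, …, 1 + l k % 2`, which saves a cover vertex on it. -/
theorem matchingNumber_deleteEdges_add_card_le (D : Set (Sym2 _)) (K : Finset (Fin p))
    (hK : ∀ k ∈ K, 2 ≤ l k) (hD : ∀ k ∈ K, ∀ q, 0 < q → q < 2 + l k % 2 → legEdge l k q ∈ D) :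
    matchingNumber ((spider p l).deleteEdges D) + K.card ≤ ∑ i, l i / 2 + 1 := by
  have hcover := matchingNumber_deleteEdges_le_sum_alternating D
    (fun i => if i ∈ K then 2 + l i % 2 else 1) fun i q hq0 hqs _ => by
      split_ifs at hqs with hi
      · exact hD i hi q hq0 hqs
      · omega
  have hsum := sum_le_sum fun i (_ : i ∈ univ) =>
    show (l i + 1 - if i ∈ K then 2 + l i % 2 else 1) / 2 + (if i ∈ K then 1 else 0) ≤ l i / 2 by
      split_ifs with hi
      · have := hK i hi
        omega
      · omega
  simp only [sum_add_distrib, sum_boole, Nat.cast_id, filter_mem_eq_inter, univ_inter] at hsum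
  omega

theorem matchingNumber_deleteEdges_le_sum_half (D : Set (Sym2 _)) {i : Fin p} (hi : 2 ≤ l i)
    (hD : ∀ q, 0 < q → q < 2 + l i % 2 → legEdge l i q ∈ D) :
    matchingNumber ((spider p l).deleteEdges D) ≤ ∑ j, l j / 2 := by
  have := matchingNumber_deleteEdges_add_card_le D {i} (by simpa using hi) (by simpa using hD)
  simpa using this

end Spider

section SpiderMinima

variable {p : ℕ} {l : Fin p → ℕ}

lemma legEdge_ne_legEdge {i : Fin p} {q q' : ℕ} (hq : q < l i) (hq' : q' < l i) (hne : q ≠ q') :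
    legEdge l i q ≠ legEdge l i q' :=
  fun h => hne ((legEdge_eq_legEdge_iff hq hq').1 h).2

lemma spider_exists_ne_edges {i : Fin p} (hi : 2 ≤ l i) :
    ∃ e₁ ∈ (spider p l).edgeSet, ∃ e₂ ∈ (spider p l).edgeSet, e₁ ≠ e₂ :=
  ⟨_, legEdge_mem_edgeSet (i := i) (q := 0) (by omega), _,
    legEdge_mem_edgeSet (i := i) (q := 1) (by omega),
    legEdge_ne_legEdge (by omega) (by omega) zero_ne_one⟩

theorem minMatchingDeleteTwo_spider_lt_of_forall_odd (hp : 2 ≤ p) (hodd : ∀ j, Odd (l j))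
    {i : Fin p} (hi : 2 ≤ l i) :
    minMatchingDeleteTwo (spider p l) < minMatchingDeleteOne (spider p l) := by
  have hi3 : 3 ≤ l i := by have := Nat.odd_iff.1 (hodd i); omega
  calc minMatchingDeleteTwo (spider p l)
      ≤ matchingNumber ((spider p l).deleteEdges {legEdge l i 1, legEdge l i 2}) :=
        minMatchingDeleteTwo_le (legEdge_mem_edgeSet (by omega)) (legEdge_mem_edgeSet (by omega))
          (legEdge_ne_legEdge (by omega) (by omega) (by omega))
    _ ≤ ∑ j, l j / 2 := matchingNumber_deleteEdges_le_sum_half _ hi fun q hq h => by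
        rw [Nat.odd_iff.1 (hodd i)] at h
        interval_cases q <;> simp
    _ < minMatchingDeleteOne (spider p l) :=
        le_minMatchingDeleteOne ⟨_, legEdge_mem_edgeSet (by omega : 0 < l i)⟩ fun e he => by
          obtain ⟨j, q, hq, rfl⟩ := exists_legEdge_eq he
          exact sum_half_lt_matchingNumber_deleteEdges_single hp hodd hq

theorem minMatchingDeleteTwo_spider_lt_of_even_of_even {a b : Fin p} (hab : a ≠ b)
    (ha : Even (l a)) (hb : Even (l b)) (ha2 : 2 ≤ l a) (hb2 : 2 ≤ l b) :
    minMatchingDeleteTwo (spider p l) < minMatchingDeleteOne (spider p l) := by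
  calc minMatchingDeleteTwo (spider p l)
      ≤ matchingNumber ((spider p l).deleteEdges {legEdge l a 1, legEdge l b 1}) :=
        minMatchingDeleteTwo_le (legEdge_mem_edgeSet (by omega)) (legEdge_mem_edgeSet (by omega))
          fun h => hab ((legEdge_eq_legEdge_iff (by omega) (by omega)).1 h).1
    _ < ∑ j, l j / 2 := by
        have := matchingNumber_deleteEdges_add_card_le {legEdge l a 1, legEdge l b 1} {a, b}
          (by simp [ha2, hb2]) fun k hk q hq h => by
            rw [mem_insert, mem_singleton] at hk
            rcases hk with rfl | rfl
            · obtain rfl : q = 1 := by rw [Nat.even_iff.1 ha] at h; omega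
              simp
            · obtain rfl : q = 1 := by rw [Nat.even_iff.1 hb] at h; omega
              simp
        rw [card_pair hab] at this
        omega
    _ ≤ minMatchingDeleteOne (spider p l) :=
        le_minMatchingDeleteOne ⟨_, legEdge_mem_edgeSet (by omega : 0 < l a)⟩ fun e he => by
          obtain ⟨j, q, hq, rfl⟩ := exists_legEdge_eq he
          exact sum_half_le_matchingNumber_deleteEdges_single hq

theorem minMatchingDeleteOne_spider_le_minMatchingDeleteTwo {i : Fin p} (hi : 2 ≤ l i)
    (he : Even (l i)) (hunique : ∀ j k, Even (l j) → Even (l k) → j = k) (hodd : ∃ k, Odd (l k)) :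
    minMatchingDeleteOne (spider p l) ≤ minMatchingDeleteTwo (spider p l) := by
  calc minMatchingDeleteOne (spider p l)
      ≤ matchingNumber ((spider p l).deleteEdges {legEdge l i 1}) :=
        minMatchingDeleteOne_le (legEdge_mem_edgeSet (by omega))
    _ ≤ ∑ j, l j / 2 := matchingNumber_deleteEdges_le_sum_half _ hi fun q hq h => by
        rw [Nat.even_iff.1 he] at h
        simp [show q = 1 by omega]
    _ ≤ minMatchingDeleteTwo (spider p l) :=
        le_minMatchingDeleteTwo (spider_exists_ne_edges hi) fun e₁ he₁ e₂ he₂ hne => by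
          obtain ⟨i₁, q₁, hq₁, rfl⟩ := exists_legEdge_eq he₁
          obtain ⟨i₂, q₂, hq₂, rfl⟩ := exists_legEdge_eq he₂
          exact sum_half_le_matchingNumber_deleteEdges_pair hunique hodd hq₁ hq₂ hne

end SpiderMinima

/-- **Observation 1.** Let `T` be a spider with `p ≥ 2` legs, each of length at least 2. Then
`min{ν(T - e₁ - e₂) : e₁ ≠ e₂ edges of T} ≤ min{ν(T - e) : e an edge of T}`, with equality
if and only if `T` has exactly one leg of even length. -/
theorem spider_min_matching_two_deleted (p : ℕ) (hp : 2 ≤ p) (l : Fin p → ℕ)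
    (hl : ∀ i, 2 ≤ l i) :
    sInf {m | ∃ e₁ ∈ (spider p l).edgeSet, ∃ e₂ ∈ (spider p l).edgeSet, e₁ ≠ e₂ ∧
        matchingNumber ((spider p l).deleteEdges {e₁, e₂}) = m} ≤
      sInf {m | ∃ e ∈ (spider p l).edgeSet,
        matchingNumber ((spider p l).deleteEdges {e}) = m} ∧
    (sInf {m | ∃ e₁ ∈ (spider p l).edgeSet, ∃ e₂ ∈ (spider p l).edgeSet, e₁ ≠ e₂ ∧
        matchingNumber ((spider p l).deleteEdges {e₁, e₂}) = m} =
      sInf {m | ∃ e ∈ (spider p l).edgeSet,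
        matchingNumber ((spider p l).deleteEdges {e}) = m} ↔
      (Finset.univ.filter fun i => Even (l i)).card = 1) := by
  change minMatchingDeleteTwo (spider p l) ≤ minMatchingDeleteOne (spider p l) ∧
    (minMatchingDeleteTwo (spider p l) = minMatchingDeleteOne (spider p l) ↔ _)
  have : Nontrivial (Fin p) := Fin.nontrivial_iff_two_le.2 hp
  let i₀ : Fin p := ⟨0, by omega⟩
  have hle := minMatchingDeleteTwo_le_minMatchingDeleteOne (spider_exists_ne_edges (hl i₀))
  refine ⟨hle, fun heq => ?_, fun hcard => ?_⟩
  · by_contra hcard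
    rcases Nat.lt_or_gt_of_ne hcard with h | h
    · have hodd : ∀ j, Odd (l j) := fun j => Nat.not_even_iff_odd.1
        (filter_eq_empty_iff.1 (card_eq_zero.1 (Nat.lt_one_iff.1 h)) (mem_univ j))
      exact (minMatchingDeleteTwo_spider_lt_of_forall_odd hp hodd (hl i₀)).ne heq
    · obtain ⟨a, ha, b, hb, hab⟩ := one_lt_card.1 h
      rw [mem_filter] at ha hb
      exact (minMatchingDeleteTwo_spider_lt_of_even_of_even hab ha.2 hb.2 (hl a) (hl b)).ne heq
  · obtain ⟨i, hi⟩ := card_eq_one.1 hcard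
    have hevens : ∀ j, Even (l j) ↔ j = i := fun j => by simpa using congrArg (j ∈ ·) hi
    obtain ⟨k, hk⟩ := exists_ne i
    exact le_antisymm hle (minMatchingDeleteOne_spider_le_minMatchingDeleteTwo (hl i)
      ((hevens i).2 rfl) (fun j k hj hk => ((hevens j).1 hj).trans ((hevens k).1 hk).symm)
      ⟨k, Nat.not_even_iff_odd.1 fun h => hk ((hevens k).1 h)⟩)
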